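/- arXiv:2404.17019 — 3 statements merged into one kernel-verified Lean document; each statement's English description precedes it below -/
import Mathlib

section
/- The Population Average Prescriptive Effect equals the covariance between the ITR and the individual treatment effect: τ_f = Cov(f(X), Y(1) - Y(0)). -/
/-! With `g = f ∘ X ∈ {0, 1}`, the realized outcome is `Y0 + g (Y1 - Y0)` and `E[g] = P(g = 1)`,
so `τ_f = E[g (Y1 - Y0)] - E[g] E[Y1 - Y0]`, which is the covariance. -/

open MeasureTheory ProbabilityTheory

/-- Covariance of two real-valued random variables. -/
noncomputable def cov {Ω : Type*} [MeasurableSpace Ω] (μ : Measure Ω) (X Y : Ω → ℝ) : ℝ :=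
  ∫ ω, (X ω - ∫ x, X x ∂μ) * (Y ω - ∫ x, Y x ∂μ) ∂μ

theorem eq_indicator_one_of_eq_zero_or_eq_one {Ω : Type*} {g : Ω → ℝ}
    (hg : ∀ ω, g ω = 0 ∨ g ω = 1) : g = {ω | g ω = 1}.indicator 1 := by
  funext ω
  rcases hg ω with h | h <;> simp [h]

section Binary

variable {Ω : Type*} [MeasurableSpace Ω] {μ : Measure Ω} {g : Ω → ℝ}

theorem integral_eq_measureReal_of_eq_zero_or_eq_one (hgm : Measurable g)
    (hg : ∀ ω, g ω = 0 ∨ g ω = 1) : ∫ ω, g ω ∂μ = μ.real {ω | g ω = 1} := by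
  conv_lhs => rw [eq_indicator_one_of_eq_zero_or_eq_one hg]
  exact integral_indicator_one (hgm (measurableSet_singleton 1))

theorem memLp_of_eq_zero_or_eq_one [IsFiniteMeasure μ] (p : ENNReal) (hgm : Measurable g)
    (hg : ∀ ω, g ω = 0 ∨ g ω = 1) : MemLp g p μ :=
  MemLp.of_bound hgm.aestronglyMeasurable 1 <| ae_of_all _ fun ω => by
    rcases hg ω with h | h <;> simp [h]

theorem integral_select_sub_eq_covariance [IsProbabilityMeasure μ] {Y1 Y0 : Ω → ℝ}
    (hY1 : MemLp Y1 2 μ) (hY0 : MemLp Y0 2 μ) (hgm : Measurable g)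
    (hg : ∀ ω, g ω = 0 ∨ g ω = 1) :
    ∫ ω, (g ω * Y1 ω + (1 - g ω) * Y0 ω) ∂μ
      - μ.real {ω | g ω = 1} * ∫ ω, Y1 ω ∂μ
      - (1 - μ.real {ω | g ω = 1}) * ∫ ω, Y0 ω ∂μ
      = covariance g (Y1 - Y0) μ := by
  have hgL2 : MemLp g 2 μ := memLp_of_eq_zero_or_eq_one 2 hgm hg
  have hY0i : Integrable Y0 μ := hY0.integrable one_le_two
  have hrealized : ∫ ω, (g ω * Y1 ω + (1 - g ω) * Y0 ω) ∂μ
      = ∫ ω, (g * (Y1 - Y0)) ω ∂μ + ∫ ω, Y0 ω ∂μ := by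
    rw [← integral_add (hgL2.integrable_mul (hY1.sub hY0)) hY0i]
    congr 1 with ω
    simp only [Pi.mul_apply, Pi.sub_apply]
    ring
  rw [covariance_eq_sub hgL2 (hY1.sub hY0), hrealized,
    ← integral_eq_measureReal_of_eq_zero_or_eq_one hgm hg,
    integral_sub' (hY1.integrable one_le_two) hY0i]
  ring

end Binary

/-- The Population Average Prescriptive Effect equals the covariance between the
ITR and the individual treatment effect: `τ_f = Cov(f(X), Y(1) - Y(0))`. -/
theorem pape_eq_cov {Ω α : Type*} [MeasurableSpace Ω] [MeasurableSpace α]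
    (μ : Measure Ω) [IsProbabilityMeasure μ]
    (Y1 Y0 : Ω → ℝ) (X : Ω → α) (f : α → ℝ)
    (hY1 : MemLp Y1 2 μ) (hY0 : MemLp Y0 2 μ)
    (hX : Measurable X) (hf : Measurable f)
    (hbin : ∀ a, f a = 0 ∨ f a = 1) :
    (∫ ω, (f (X ω) * Y1 ω + (1 - f (X ω)) * Y0 ω) ∂μ)
      - (μ {ω | f (X ω) = 1}).toReal * (∫ ω, Y1 ω ∂μ)
      - (1 - (μ {ω | f (X ω) = 1}).toReal) * (∫ ω, Y0 ω ∂μ)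
      = cov μ (fun ω => f (X ω)) (fun ω => Y1 ω - Y0 ω) :=
  -- `cov μ` is definitionally `covariance · · μ`, and `μ.real s` is `(μ s).toReal`
  integral_select_sub_eq_covariance hY1 hY0 (hf.comp hX) fun ω => hbin (X ω)
end

section
/- The variance of the PAV estimator equals E(S_{f1}²)/n_1 + E(S_{f0}²)/n_0, where S_{ft}² is the sample variance of Y_{fi}(t) = 1{f(X_i) = t} Y_i(t). -/
open MeasureTheory ProbabilityTheory Finset

/-! For each assignment `s` the estimator has mean `E A + E B`, where `Aᵢ = f(Xᵢ) Yᵢ(1)` and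
`Bᵢ = (1 - f(Xᵢ)) Yᵢ(0)`, so its variance over both sources of randomness is the average over `s`
of its variance given `s`. Treated and control units of `s` are distinct, hence independent, so
that conditional variance is `Var A / n₁ + Var B / n₀` whatever `s` is. Finally the sample
variance is unbiased: `E S² = Var`. Only first and second moments enter, so independence is used
only through uncorrelatedness. -/

lemma sum_sum_ite_eq {ι : Type*} [DecidableEq ι] (t : Finset ι) (c d : ℝ) :
    ∑ i ∈ t, ∑ j ∈ t, (if i = j then c else d) = #t * c + #t * (#t - 1) * d := by
  have hrow : ∀ i ∈ t, ∑ j ∈ t, (if i = j then c else d) = c + (#t - 1) * d := by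
    intro i hi
    have hsplit : ∀ j, (if i = j then c else d) = d + if i = j then c - d else 0 := by
      intro j; split_ifs <;> ring
    simp only [hsplit, sum_add_distrib, sum_ite_eq, if_pos hi, sum_const, nsmul_eq_mul]
    ring
  rw [sum_congr rfl hrow, sum_const, nsmul_eq_mul]
  ring

noncomputable def sampleVariance {n : ℕ} (x : Fin n → ℝ) : ℝ :=
  (∑ i, (x i - (1 / (n : ℝ)) * ∑ j, x j) ^ 2) / ((n : ℝ) - 1)

lemma sum_sub_mean_sq {n : ℕ} (hn : n ≠ 0) (x : Fin n → ℝ) :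
    ∑ i, (x i - (1 / (n : ℝ)) * ∑ j, x j) ^ 2 = ∑ i, x i ^ 2 - (∑ i, x i) ^ 2 / n := by
  simp only [sub_sq, sum_add_distrib, sum_sub_distrib, sum_const, card_univ, Fintype.card_fin,
    nsmul_eq_mul, ← sum_mul, ← mul_sum]
  field_simp
  ring

noncomputable def assignmentMean (n n1 : ℕ) (F : Finset (Fin n) → ℝ) : ℝ :=
  (1 / (n.choose n1 : ℝ)) * ∑ s ∈ powersetCard n1 (univ : Finset (Fin n)), F s

lemma assignmentMean_eq_of_forall {n n1 : ℕ} (hle : n1 ≤ n) {F : Finset (Fin n) → ℝ} {x : ℝ}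
    (hF : ∀ s : Finset (Fin n), #s = n1 → F s = x) : assignmentMean n n1 F = x := by
  have hchoose : (n.choose n1 : ℝ) ≠ 0 := Nat.cast_ne_zero.mpr (Nat.choose_pos hle).ne'
  rw [assignmentMean, sum_congr rfl fun s hs => hF s (mem_powersetCard.mp hs).2, sum_const,
    card_powersetCard, card_univ, Fintype.card_fin, nsmul_eq_mul]
  field_simp

/-- The PAV estimator `λ̂_f` for the assignment treating the units in `s`, evaluated at the
outcomes `a i = f(Xᵢ) Yᵢ(1)` and `b i = (1 - f(Xᵢ)) Yᵢ(0)`. -/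
noncomputable def pavEstimator {n : ℕ} (n1 : ℕ) (s : Finset (Fin n)) (a b : Fin n → ℝ) : ℝ :=
  (1 / (n1 : ℝ)) * ∑ i ∈ s, a i + (1 / ((n - n1 : ℕ) : ℝ)) * ∑ i ∈ sᶜ, b i

section Moments

variable {Ω ι : Type*} [MeasurableSpace Ω] {μ : Measure Ω}

lemma integral_sum_mul_sum {C D : ι → Ω → ℝ} (hC : ∀ i, MemLp (C i) 2 μ)
    (hD : ∀ i, MemLp (D i) 2 μ) (s t : Finset ι) :
    ∫ ω, (∑ i ∈ s, C i ω) * (∑ j ∈ t, D j ω) ∂μ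
      = ∑ i ∈ s, ∑ j ∈ t, ∫ ω, C i ω * D j ω ∂μ := by
  have hCD : ∀ i j, Integrable (fun ω => C i ω * D j ω) μ :=
    fun i j => (hC i).integrable_mul (hD j)
  simp_rw [sum_mul_sum]
  rw [integral_finsetSum _ fun i _ => integrable_finsetSum _ fun j _ => hCD i j]
  exact sum_congr rfl fun i _ => integral_finsetSum _ fun j _ => hCD i j

lemma integral_sq_sum_of_uncorrelated {C : ι → Ω → ℝ} {c c2 : ℝ} (hC : ∀ i, MemLp (C i) 2 μ)
    (hsq : ∀ i, ∫ ω, C i ω ^ 2 ∂μ = c2)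
    (hcross : Pairwise fun i j => ∫ ω, C i ω * C j ω ∂μ = c * c) (s : Finset ι) :
    ∫ ω, (∑ i ∈ s, C i ω) ^ 2 ∂μ = #s * c2 + #s * (#s - 1) * (c * c) := by
  classical
  have hmoment : ∀ i j, ∫ ω, C i ω * C j ω ∂μ = if i = j then c2 else c * c := by
    intro i j
    split_ifs with h
    · subst h
      simp_rw [← sq]
      exact hsq i
    · exact hcross h
  simp_rw [sq, integral_sum_mul_sum hC hC, hmoment]
  exact sum_sum_ite_eq s c2 (c * c)

lemma integral_sampleVariance {n : ℕ} (hn : 2 ≤ n) {C : Fin n → Ω → ℝ} {c c2 : ℝ}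
    (hC : ∀ i, MemLp (C i) 2 μ) (hsq : ∀ i, ∫ ω, C i ω ^ 2 ∂μ = c2)
    (hcross : Pairwise fun i j => ∫ ω, C i ω * C j ω ∂μ = c * c) :
    ∫ ω, sampleVariance (fun i => C i ω) ∂μ = c2 - c * c := by
  have hn0 : (n : ℝ) ≠ 0 := Nat.cast_ne_zero.mpr (by omega)
  have hn1 : (n : ℝ) - 1 ≠ 0 := by
    have : (2 : ℝ) ≤ n := by exact_mod_cast hn
    linarith
  have hsq_int : Integrable (fun ω => ∑ i, C i ω ^ 2) μ :=
    integrable_finsetSum _ fun i _ => (hC i).integrable_sq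
  have hsum_sq_int : Integrable (fun ω => (∑ i, C i ω) ^ 2) μ :=
    (memLp_finsetSum univ fun i _ => hC i).integrable_sq
  simp only [sampleVariance, sum_sub_mean_sq (by omega : n ≠ 0)]
  rw [integral_div, integral_sub hsq_int (hsum_sq_int.div_const _), integral_div,
    integral_finsetSum _ fun i _ => (hC i).integrable_sq,
    integral_sq_sum_of_uncorrelated hC hsq hcross]
  simp only [hsq, sum_const, card_univ, Fintype.card_fin, nsmul_eq_mul]
  field_simp
  ring

variable {n n1 : ℕ} {s : Finset (Fin n)} {A B : Fin n → Ω → ℝ} {a b a2 b2 : ℝ}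

lemma card_compl_of_card_eq (hs : #s = n1) : #sᶜ = n - n1 := by
  rw [card_compl, Fintype.card_fin, hs]

lemma integral_pavEstimator (hs : #s = n1) (hn1 : n1 ≠ 0) (hlt : n1 < n)
    (hA : ∀ i, Integrable (A i) μ) (hB : ∀ i, Integrable (B i) μ)
    (hEA : ∀ i, ∫ ω, A i ω ∂μ = a) (hEB : ∀ i, ∫ ω, B i ω ∂μ = b) :
    ∫ ω, pavEstimator n1 s (fun i => A i ω) (fun i => B i ω) ∂μ = a + b := by
  have hn1R : (n1 : ℝ) ≠ 0 := Nat.cast_ne_zero.mpr hn1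
  have hn0R : ((n - n1 : ℕ) : ℝ) ≠ 0 := Nat.cast_ne_zero.mpr (by omega)
  unfold pavEstimator
  rw [integral_add ((integrable_finsetSum _ fun i _ => hA i).const_mul _)
      ((integrable_finsetSum _ fun i _ => hB i).const_mul _),
    integral_const_mul, integral_const_mul, integral_finsetSum _ fun i _ => hA i,
    integral_finsetSum _ fun i _ => hB i]
  simp only [hEA, hEB, sum_const, card_compl_of_card_eq hs, hs, nsmul_eq_mul]
  field_simp

lemma integral_pavEstimator_sq (hs : #s = n1) (hn1 : n1 ≠ 0) (hlt : n1 < n)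
    (hA : ∀ i, MemLp (A i) 2 μ) (hB : ∀ i, MemLp (B i) 2 μ)
    (hEA2 : ∀ i, ∫ ω, A i ω ^ 2 ∂μ = a2) (hEB2 : ∀ i, ∫ ω, B i ω ^ 2 ∂μ = b2)
    (hAA : Pairwise fun i j => ∫ ω, A i ω * A j ω ∂μ = a * a)
    (hBB : Pairwise fun i j => ∫ ω, B i ω * B j ω ∂μ = b * b)
    (hAB : Pairwise fun i j => ∫ ω, A i ω * B j ω ∂μ = a * b) :
    ∫ ω, pavEstimator n1 s (fun i => A i ω) (fun i => B i ω) ^ 2 ∂μ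
      = (a + b) ^ 2 + (a2 - a * a) / n1 + (b2 - b * b) / (n - n1 : ℕ) := by
  have hn1R : (n1 : ℝ) ≠ 0 := Nat.cast_ne_zero.mpr hn1
  have hn0R : ((n - n1 : ℕ) : ℝ) ≠ 0 := Nat.cast_ne_zero.mpr (by omega)
  have hcross : ∫ ω, (∑ i ∈ s, A i ω) * (∑ j ∈ sᶜ, B j ω) ∂μ = #s * #sᶜ * (a * b) := by
    rw [integral_sum_mul_sum hA hB, sum_congr rfl fun i hi => sum_congr rfl fun j hj =>
      hAB (ne_of_mem_of_not_mem hi (mem_compl.mp hj))]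
    simp only [sum_const, nsmul_eq_mul]
    ring
  have hsumA : MemLp (fun ω => ∑ i ∈ s, A i ω) 2 μ := memLp_finsetSum s fun i _ => hA i
  have hsumB : MemLp (fun ω => ∑ i ∈ sᶜ, B i ω) 2 μ := memLp_finsetSum sᶜ fun i _ => hB i
  have hprod : Integrable (fun ω => (∑ i ∈ s, A i ω) * (∑ j ∈ sᶜ, B j ω)) μ :=
    hsumA.integrable_mul hsumB
  have hexpand : ∀ ω, pavEstimator n1 s (fun i => A i ω) (fun i => B i ω) ^ 2
      = (1 / (n1 : ℝ)) ^ 2 * (∑ i ∈ s, A i ω) ^ 2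
        + 2 * (1 / (n1 : ℝ)) * (1 / ((n - n1 : ℕ) : ℝ))
          * ((∑ i ∈ s, A i ω) * (∑ j ∈ sᶜ, B j ω))
        + (1 / ((n - n1 : ℕ) : ℝ)) ^ 2 * (∑ i ∈ sᶜ, B i ω) ^ 2 := by
    intro ω
    unfold pavEstimator
    ring
  simp_rw [hexpand]
  rw [integral_add, integral_add, integral_const_mul, integral_const_mul, integral_const_mul, hcross,
    integral_sq_sum_of_uncorrelated hA hEA2 hAA, integral_sq_sum_of_uncorrelated hB hEB2 hBB,
    card_compl_of_card_eq hs, hs]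
  · field_simp
    ring
  exacts [hsumA.integrable_sq.const_mul _, hprod.const_mul _,
    (hsumA.integrable_sq.const_mul _).add (hprod.const_mul _), hsumB.integrable_sq.const_mul _]

theorem pav_variance_of_uncorrelated [IsFiniteMeasure μ] (hn1 : n1 ≠ 0) (hlt : n1 < n)
    (hA : ∀ i, MemLp (A i) 2 μ) (hB : ∀ i, MemLp (B i) 2 μ)
    (hEA : ∀ i, ∫ ω, A i ω ∂μ = a) (hEB : ∀ i, ∫ ω, B i ω ∂μ = b)
    (hEA2 : ∀ i, ∫ ω, A i ω ^ 2 ∂μ = a2) (hEB2 : ∀ i, ∫ ω, B i ω ^ 2 ∂μ = b2)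
    (hAA : Pairwise fun i j => ∫ ω, A i ω * A j ω ∂μ = a * a)
    (hBB : Pairwise fun i j => ∫ ω, B i ω * B j ω ∂μ = b * b)
    (hAB : Pairwise fun i j => ∫ ω, A i ω * B j ω ∂μ = a * b) :
    assignmentMean n n1
        (fun s => ∫ ω, pavEstimator n1 s (fun i => A i ω) (fun i => B i ω) ^ 2 ∂μ)
      - assignmentMean n n1
          (fun s => ∫ ω, pavEstimator n1 s (fun i => A i ω) (fun i => B i ω) ∂μ) ^ 2
      = (∫ ω, sampleVariance (fun i => A i ω) ∂μ) / n1
        + (∫ ω, sampleVariance (fun i => B i ω) ∂μ) / (n - n1 : ℕ) := by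
  rw [assignmentMean_eq_of_forall hlt.le fun s hs =>
      integral_pavEstimator_sq hs hn1 hlt hA hB hEA2 hEB2 hAA hBB hAB,
    assignmentMean_eq_of_forall hlt.le fun s hs =>
      integral_pavEstimator hs hn1 hlt (fun i => (hA i).integrable one_le_two)
        (fun i => (hB i).integrable one_le_two) hEA hEB,
    integral_sampleVariance (by omega) hA hEA2 hAA, integral_sampleVariance (by omega) hB hEB2 hBB]
  ring

end Moments
section Independent

variable {Ω β : Type*} [MeasurableSpace Ω] [MeasurableSpace β] {μ : Measure Ω} {n n1 : ℕ}
  {Z : Fin n → Ω → β} {i₀ : Fin n}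

lemma integral_comp_mul_comp_of_iIndepFun (hZ : iIndepFun Z μ)
    (hident : ∀ i, IdentDistrib (Z i) (Z i₀) μ μ) {g h : β → ℝ} (hg : Measurable g)
    (hh : Measurable h) {i j : Fin n} (hij : i ≠ j) :
    ∫ ω, g (Z i ω) * h (Z j ω) ∂μ = (∫ ω, g (Z i₀ ω) ∂μ) * ∫ ω, h (Z i₀ ω) ∂μ :=
  (((hZ.indepFun hij).comp hg hh).integral_fun_mul_eq_mul_integral
      (hg.comp_aemeasurable (hident i).aemeasurable_fst).aestronglyMeasurable
      (hh.comp_aemeasurable (hident j).aemeasurable_fst).aestronglyMeasurable).trans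
    (congrArg₂ (· * ·) ((hident i).comp hg).integral_eq ((hident j).comp hh).integral_eq)

theorem pav_variance_of_iid [IsFiniteMeasure μ] (hZ : iIndepFun Z μ)
    (hident : ∀ i, IdentDistrib (Z i) (Z i₀) μ μ) {g h : β → ℝ} (hg : Measurable g)
    (hh : Measurable h) (hgL2 : MemLp (fun ω => g (Z i₀ ω)) 2 μ)
    (hhL2 : MemLp (fun ω => h (Z i₀ ω)) 2 μ) (hn1 : n1 ≠ 0) (hlt : n1 < n) :
    assignmentMean n n1
        (fun s => ∫ ω, pavEstimator n1 s (fun i => g (Z i ω)) (fun i => h (Z i ω)) ^ 2 ∂μ)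
      - assignmentMean n n1
          (fun s => ∫ ω, pavEstimator n1 s (fun i => g (Z i ω)) (fun i => h (Z i ω)) ∂μ) ^ 2
      = (∫ ω, sampleVariance (fun i => g (Z i ω)) ∂μ) / n1
        + (∫ ω, sampleVariance (fun i => h (Z i ω)) ∂μ) / (n - n1 : ℕ) := by
  have hL2 : ∀ {u : β → ℝ}, Measurable u → MemLp (fun ω => u (Z i₀ ω)) 2 μ →
      ∀ i, MemLp (fun ω => u (Z i ω)) 2 μ :=
    fun hu hu2 i => ((hident i).comp hu).memLp_iff.mpr hu2
  have hmean : ∀ {u : β → ℝ}, Measurable u → ∀ i, ∫ ω, u (Z i ω) ∂μ = ∫ ω, u (Z i₀ ω) ∂μ :=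
    fun hu i => ((hident i).comp hu).integral_eq
  exact pav_variance_of_uncorrelated hn1 hlt (hL2 hg hgL2) (hL2 hh hhL2) (hmean hg) (hmean hh)
    (hmean (hg.pow_const 2)) (hmean (hh.pow_const 2))
    (fun _ _ hij => integral_comp_mul_comp_of_iIndepFun hZ hident hg hg hij)
    (fun _ _ hij => integral_comp_mul_comp_of_iIndepFun hZ hident hh hh hij)
    (fun _ _ hij => integral_comp_mul_comp_of_iIndepFun hZ hident hg hh hij)

end Independent

/-- Under complete randomization (uniform over treatment assignments of size `n₁`)
and i.i.d. sampling, the variance of the PAV estimator (over the joint randomness,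
computed as `E[λ̂²] - (E[λ̂])²`) equals `E(S_{f1}²)/n₁ + E(S_{f0}²)/n₀`, where
`S_{ft}²` is the sample variance of `Y_{fi}(t) = 1{f(Xᵢ) = t} Yᵢ(t)` (so
`Y_{fi}(1) = f(Xᵢ) Yᵢ(1)` and `Y_{fi}(0) = (1 - f(Xᵢ)) Yᵢ(0)`). -/
theorem pav_estimator_variance {Ω α : Type*} [MeasurableSpace Ω] [MeasurableSpace α]
    (μ : Measure Ω) [IsProbabilityMeasure μ]
    (n n1 : ℕ) (hn1 : 1 ≤ n1) (hlt : n1 < n)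
    (Y1 Y0 : Fin n → Ω → ℝ) (X : Fin n → Ω → α) (f : α → ℝ)
    (hL2 : ∀ i, MemLp (Y1 i) 2 μ ∧ MemLp (Y0 i) 2 μ)
    (hmeas : ∀ i, Measurable (Y1 i) ∧ Measurable (Y0 i) ∧ Measurable (X i))
    (hf : Measurable f) (hbin : ∀ a, f a = 0 ∨ f a = 1)
    (hindep : iIndepFun
      (fun i ω => (Y1 i ω, Y0 i ω, X i ω)) μ)
    (hident : ∀ i : Fin n,
      Measure.map (fun ω => (Y1 i ω, Y0 i ω, X i ω)) μ
        = Measure.map (fun ω => (Y1 ⟨0, by omega⟩ ω, Y0 ⟨0, by omega⟩ ω,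
            X ⟨0, by omega⟩ ω)) μ) :
    (1 / (n.choose n1 : ℝ)) *
        (∑ s ∈ Finset.powersetCard n1 (Finset.univ : Finset (Fin n)),
          ∫ ω, ((1 / (n1 : ℝ)) * ∑ i ∈ s, f (X i ω) * Y1 i ω
            + (1 / ((n - n1 : ℕ) : ℝ)) * ∑ i ∈ sᶜ, (1 - f (X i ω)) * Y0 i ω) ^ 2 ∂μ)
      - ((1 / (n.choose n1 : ℝ)) *
          ∑ s ∈ Finset.powersetCard n1 (Finset.univ : Finset (Fin n)),
            ∫ ω, ((1 / (n1 : ℝ)) * ∑ i ∈ s, f (X i ω) * Y1 i ω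
              + (1 / ((n - n1 : ℕ) : ℝ)) * ∑ i ∈ sᶜ, (1 - f (X i ω)) * Y0 i ω) ∂μ) ^ 2
      = (∫ ω, (∑ i, (f (X i ω) * Y1 i ω
              - (1 / (n : ℝ)) * ∑ j, f (X j ω) * Y1 j ω) ^ 2) / ((n : ℝ) - 1) ∂μ)
            / (n1 : ℝ)
        + (∫ ω, (∑ i, ((1 - f (X i ω)) * Y0 i ω
              - (1 / (n : ℝ)) * ∑ j, (1 - f (X j ω)) * Y0 j ω) ^ 2) / ((n : ℝ) - 1) ∂μ)
            / ((n - n1 : ℕ) : ℝ) := by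
  have hZ : ∀ i, Measurable fun ω => (Y1 i ω, Y0 i ω, X i ω) :=
    fun i => (hmeas i).1.prodMk ((hmeas i).2.1.prodMk (hmeas i).2.2)
  have hf_bound : ∀ a, ‖f a‖ ≤ 1 ∧ ‖1 - f a‖ ≤ 1 := fun a => by
    rcases hbin a with h | h <;> simp [h]
  have hfX : Measurable fun ω => f (X ⟨0, by omega⟩ ω) := hf.comp (hmeas _).2.2
  exact pav_variance_of_iid hindep
    (fun i => ⟨(hZ i).aemeasurable, (hZ _).aemeasurable, hident i⟩)
    (g := fun p => f p.2.2 * p.1) (h := fun p => (1 - f p.2.2) * p.2.1) (by fun_prop)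
    (by fun_prop)
    ((hL2 _).1.mul' (memLp_top_of_bound hfX.aestronglyMeasurable 1
      (ae_of_all _ fun ω => (hf_bound _).1)))
    ((hL2 _).2.mul' (memLp_top_of_bound (measurable_const.sub hfX).aestronglyMeasurable 1
      (ae_of_all _ fun ω => (hf_bound _).2)))
    (by omega) hlt
end

section
/- Under the equal-allocation setting, the variance of the ex-ante PAPE estimator minus the variance of the ex-post PAPE estimator equals (2n/(n-1)²)[p_f² V(Y(1)) + (1-p_f)² V(Y(0)) + 2p_f² V(Y(1)|f(X)=1) + 2(1-p_f)² V(Y(0)|f(X)=0) + 2p_f(1-p_f){(1-p_f) M_{00}² + p_f M_{11}²}], which is nonnegative, given the centering condition E(Y(1)+Y(0)|f(X)=1) = E(Y(1)+Y(0)|f(X)=0) = 0, where M_{st} = E(Y(s)|f(X)=t). -/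
/-!
Splitting `E Y(s)` over `{f(X) = 1}` and its complement, the centering conditions give
`E Y(1) = p M₁₁ - (1 - p) M₀₀` and `E Y(0) = (1 - p) M₀₀ - p M₁₁`; substituting these into the
difference turns it into the claimed form. Every term of that form is nonnegative, the
conditional variances by Jensen's inequality `E(Y | A)² ≤ E(Y² | A)`.
-/

open MeasureTheory

/-- Variance of a real-valued random variable. -/
noncomputable def Var {Ω : Type*} [MeasurableSpace Ω] (μ : Measure Ω) (X : Ω → ℝ) : ℝ :=
  ∫ ω, (X ω - ∫ x, X x ∂μ) ^ 2 ∂μ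

/-- Conditional expectation of `Y` given the event `A`. -/
noncomputable def cexp {Ω : Type*} [MeasurableSpace Ω] (μ : Measure Ω) (A : Set Ω)
    (Y : Ω → ℝ) : ℝ :=
  (∫ ω in A, Y ω ∂μ) / (μ A).toReal

lemma Var_nonneg {Ω : Type*} [MeasurableSpace Ω] (μ : Measure Ω) (X : Ω → ℝ) : 0 ≤ Var μ X :=
  integral_nonneg fun _ => sq_nonneg _

lemma setOf_eq_zero_eq_compl {Ω : Type*} {g : Ω → ℝ} (hg : ∀ ω, g ω = 0 ∨ g ω = 1) :
    {ω | g ω = 0} = {ω | g ω = 1}ᶜ := by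
  ext ω; rcases hg ω with h | h <;> simp [h]

section cexp

variable {Ω : Type*} [MeasurableSpace Ω] {μ : Measure Ω} {A : Set Ω} {Y : Ω → ℝ}

lemma cexp_eq_setAverage : cexp μ A Y = ⨍ ω in A, Y ω ∂μ := by
  rw [setAverage_eq, smul_eq_mul, cexp, measureReal_def, div_eq_inv_mul]

variable [IsFiniteMeasure μ]

lemma measureReal_mul_cexp : μ.real A * cexp μ A Y = ∫ ω in A, Y ω ∂μ := by
  rw [cexp_eq_setAverage, ← smul_eq_mul, measure_smul_setAverage _ (measure_ne_top μ A)]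

lemma integral_eq_measureReal_mul_cexp_add_compl (hA : MeasurableSet A) (hY : Integrable Y μ) :
    ∫ ω, Y ω ∂μ = μ.real A * cexp μ A Y + μ.real Aᶜ * cexp μ Aᶜ Y := by
  rw [measureReal_mul_cexp, measureReal_mul_cexp, integral_add_compl hA hY]

/-- On a null set both sides take the junk value `0`. -/
lemma sq_cexp_le_cexp_sq (hY : MemLp Y 2 μ) :
    cexp μ A Y ^ 2 ≤ cexp μ A (fun ω => Y ω ^ 2) := by
  rw [cexp_eq_setAverage, cexp_eq_setAverage]
  rcases eq_or_ne (μ A) 0 with hA | hA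
  · simp [Measure.restrict_eq_zero.mpr hA]
  exact (even_two.convexOn_pow (𝕜 := ℝ)).map_set_average_le (continuousOn_pow 2) isClosed_univ
    hA (measure_ne_top μ A) (by simp) (hY.integrable one_le_two).integrableOn
    hY.integrable_sq.integrableOn

end cexp

theorem exante_expost_var_diff_general {Ω α : Type*} [MeasurableSpace Ω] [MeasurableSpace α]
    (μ : Measure Ω) [IsProbabilityMeasure μ]
    (Y1 Y0 : Ω → ℝ) (X : Ω → α) (f : α → ℝ)
    (hY1 : MemLp Y1 2 μ) (hY0 : MemLp Y0 2 μ)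
    (hX : Measurable X) (hf : Measurable f)
    (hbin : ∀ a, f a = 0 ∨ f a = 1)
    (n : ℕ)
    (p M11 M00 M01 M10 EY1sq EY0sq D : ℝ)
    (hp : p = (μ {ω | f (X ω) = 1}).toReal)
    (hM11 : M11 = cexp μ {ω | f (X ω) = 1} Y1)
    (hM00 : M00 = cexp μ {ω | f (X ω) = 0} Y0)
    (hM01 : M01 = cexp μ {ω | f (X ω) = 1} Y0)
    (hM10 : M10 = cexp μ {ω | f (X ω) = 0} Y1)
    (hE1 : EY1sq = cexp μ {ω | f (X ω) = 1} (fun ω => Y1 ω ^ 2))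
    (hE0 : EY0sq = cexp μ {ω | f (X ω) = 0} (fun ω => Y0 ω ^ 2))
    (hcent1 : M11 + M01 = 0) (hcent0 : M00 + M10 = 0)
    (hD : D = (2 * (n : ℝ) / ((n : ℝ) - 1) ^ 2)
        * (p ^ 2 * Var μ Y1 + (1 - p) ^ 2 * Var μ Y0
          - 2 * p * (1 - p) * M00 * M11
          + 2 * p ^ 2 * (EY1sq - (∫ ω, Y1 ω ∂μ) * M11)
          + 2 * (1 - p) ^ 2 * (EY0sq - (∫ ω, Y0 ω ∂μ) * M00))) :
    D = (2 * (n : ℝ) / ((n : ℝ) - 1) ^ 2)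
        * (p ^ 2 * Var μ Y1 + (1 - p) ^ 2 * Var μ Y0
          + 2 * p ^ 2 * (EY1sq - M11 ^ 2)
          + 2 * (1 - p) ^ 2 * (EY0sq - M00 ^ 2)
          + 2 * p * (1 - p) * ((1 - p) * M00 ^ 2 + p * M11 ^ 2))
      ∧ 0 ≤ D := by
  set A : Set Ω := {ω | f (X ω) = 1}
  have hA : MeasurableSet A := hf.comp hX (measurableSet_singleton 1)
  rw [setOf_eq_zero_eq_compl (g := fun ω => f (X ω)) (hbin <| X ·)] at hM00 hM10 hE0
  have hpA : μ.real A = p := hp.symm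
  have hpAc : μ.real Aᶜ = 1 - p := by rw [probReal_compl_eq_one_sub hA, hpA]
  have hEY1 : ∫ ω, Y1 ω ∂μ = p * M11 + (1 - p) * M10 := by
    rw [integral_eq_measureReal_mul_cexp_add_compl hA (hY1.integrable one_le_two), hpA, hpAc,
      hM11, hM10]
  have hEY0 : ∫ ω, Y0 ω ∂μ = p * M01 + (1 - p) * M00 := by
    rw [integral_eq_measureReal_mul_cexp_add_compl hA (hY0.integrable one_le_two), hpA, hpAc,
      hM01, hM00]
  have hJ1 : M11 ^ 2 ≤ EY1sq := hM11 ▸ hE1 ▸ sq_cexp_le_cexp_sq hY1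
  have hJ0 : M00 ^ 2 ≤ EY0sq := hM00 ▸ hE0 ▸ sq_cexp_le_cexp_sq hY0
  have hp0 : 0 ≤ p := hpA ▸ measureReal_nonneg
  have hp1 : 0 ≤ 1 - p := hpAc ▸ measureReal_nonneg
  obtain rfl : M01 = -M11 := by linarith
  obtain rfl : M10 = -M00 := by linarith
  refine ⟨?_, ?_⟩ <;> rw [hD, hEY1, hEY0]
  · ring
  refine mul_nonneg (by positivity) ?_
  linarith [mul_nonneg (sq_nonneg p) (Var_nonneg μ Y1),
    mul_nonneg (sq_nonneg (1 - p)) (Var_nonneg μ Y0),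
    mul_nonneg (sq_nonneg p) (sub_nonneg.mpr hJ1),
    mul_nonneg (sq_nonneg (1 - p)) (sub_nonneg.mpr hJ0),
    show 0 ≤ p * (1 - p) * ((1 - p) * M00 ^ 2 + p * M11 ^ 2) by positivity]

/-- Under the equal-allocation setting and the centering conditions
`M_{11} + M_{01} = 0` and `M_{00} + M_{10} = 0`, the ex-ante minus ex-post variance
difference (Equation (11) of the paper) equals
`(2n/(n-1)²)[p² V(Y(1)) + (1-p)² V(Y(0)) + 2p² V(Y(1)|f=1) + 2(1-p)² V(Y(0)|f=0)
  + 2p(1-p){(1-p) M_{00}² + p M_{11}²}]`, which is nonnegative. -/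
theorem exante_expost_var_diff {Ω α : Type*} [MeasurableSpace Ω] [MeasurableSpace α]
    (μ : Measure Ω) [IsProbabilityMeasure μ]
    (Y1 Y0 : Ω → ℝ) (X : Ω → α) (f : α → ℝ)
    (hY1 : MemLp Y1 2 μ) (hY0 : MemLp Y0 2 μ)
    (hX : Measurable X) (hf : Measurable f)
    (hbin : ∀ a, f a = 0 ∨ f a = 1)
    (n : ℕ) (hn : 2 ≤ n)
    (p M11 M00 M01 M10 EY1sq EY0sq D : ℝ)
    (hp : p = (μ {ω | f (X ω) = 1}).toReal)
    (hppos : 0 < p) (hplt : p < 1)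
    (hM11 : M11 = cexp μ {ω | f (X ω) = 1} Y1)
    (hM00 : M00 = cexp μ {ω | f (X ω) = 0} Y0)
    (hM01 : M01 = cexp μ {ω | f (X ω) = 1} Y0)
    (hM10 : M10 = cexp μ {ω | f (X ω) = 0} Y1)
    (hE1 : EY1sq = cexp μ {ω | f (X ω) = 1} (fun ω => Y1 ω ^ 2))
    (hE0 : EY0sq = cexp μ {ω | f (X ω) = 0} (fun ω => Y0 ω ^ 2))
    (hcent1 : M11 + M01 = 0) (hcent0 : M00 + M10 = 0)
    (hD : D = (2 * (n : ℝ) / ((n : ℝ) - 1) ^ 2)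
        * (p ^ 2 * Var μ Y1 + (1 - p) ^ 2 * Var μ Y0
          - 2 * p * (1 - p) * M00 * M11
          + 2 * p ^ 2 * (EY1sq - (∫ ω, Y1 ω ∂μ) * M11)
          + 2 * (1 - p) ^ 2 * (EY0sq - (∫ ω, Y0 ω ∂μ) * M00))) :
    D = (2 * (n : ℝ) / ((n : ℝ) - 1) ^ 2)
        * (p ^ 2 * Var μ Y1 + (1 - p) ^ 2 * Var μ Y0
          + 2 * p ^ 2 * (EY1sq - M11 ^ 2)
          + 2 * (1 - p) ^ 2 * (EY0sq - M00 ^ 2)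
          + 2 * p * (1 - p) * ((1 - p) * M00 ^ 2 + p * M11 ^ 2))
      ∧ 0 ≤ D :=
  exante_expost_var_diff_general μ Y1 Y0 X f hY1 hY0 hX hf hbin n p M11 M00 M01 M10 EY1sq EY0sq D hp
    hM11 hM00 hM01 hM10 hE1 hE0 hcent1 hcent0 hD
end
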